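/- For every integer n ≥ 3, the (−1)-st moment of distance satisfies I(n,−1) = (n/π) · [ γ − Ci(2π/n) + log(2π/n) + ( Si(π) − Si(2π/n) ) · tan(π/n) ], where γ is the Euler–Mascheroni constant; equivalently, I(n,−1) = (n/π) · [ ∫_0^{2π/n} (1 − cos t)/t dt + ( ∫_{2π/n}^{π} (sin t)/t dt ) · tan(π/n) ]. -/

import Mathlib

open MeasureTheory

/-- The `(-1)`-st moment of distance on the homogeneous lens space `L(n;1)`,
expressed as an explicit integral over a fundamental domain in join coordinates. -/
noncomputable def momentInegOne (n : ℕ) : ℝ :=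
  ((n : ℝ) ^ 2 / (2 * Real.pi ^ 2)) *
    ∫ θ₂ in (-(Real.pi / n))..(Real.pi / n),
      ∫ θ₁ in (-(Real.pi / n))..(Real.pi / n),
        ∫ η in (0 : ℝ)..(Real.pi / 2),
          (Real.arccos (Real.cos θ₁ * Real.cos η))⁻¹ * Real.cos η * Real.sin η

/-- The sine integral `Si(x) = ∫_0^x sin t / t dt`. -/
noncomputable def Si (x : ℝ) : ℝ := ∫ t in (0 : ℝ)..x, Real.sin t / t

/-- The cosine integral `Ci(x) = γ + log x - ∫_0^x (1 - cos t)/t dt`. -/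
noncomputable def Ci (x : ℝ) : ℝ :=
  Real.eulerMascheroniConstant + Real.log x - ∫ t in (0 : ℝ)..x, (1 - Real.cos t) / t

/-!
The substitution `s = 2 arccos (cos θ cos η)` turns the inner integral into
`(∫_{2θ}^π sinc) / (2 cos² θ)`. The outer integrand is even in `θ`, and on `[0, π/n]` one
integrates by parts against `tan θ = ∫ 1 / cos²`; the remainder collapses through
`sinc (2θ) tan θ = (1 - cos 2θ) / (2θ)`, which rescales to `∫_0^{2π/n} (1 - cos t) / t`.
-/

open Real Set intervalIntegral

lemma integral_sin_div_eq_integral_sinc (a b : ℝ) :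
    ∫ t in a..b, sin t / t = ∫ t in a..b, sinc t := by
  refine integral_congr_ae ?_
  filter_upwards [Measure.ae_ne volume 0] with t ht _
  exact (sinc_of_ne_zero ht).symm

lemma Si_sub_Si (x y : ℝ) : Si y - Si x = ∫ t in x..y, sin t / t := by
  simp only [Si, integral_sin_div_eq_integral_sinc]
  exact integral_interval_sub_left (continuous_sinc.intervalIntegrable _ _)
    (continuous_sinc.intervalIntegrable _ _)

lemma integral_neg_eq_two_smul_of_even {E : Type*} [NormedAddCommGroup E] [NormedSpace ℝ E]
    {f : ℝ → E} {a : ℝ} (heven : ∀ x, f (-x) = f x) (hf : IntervalIntegrable f volume 0 a) :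
    ∫ x in -a..a, f x = (2 : ℝ) • ∫ x in 0..a, f x := by
  have hneg : IntervalIntegrable f volume (-a) 0 := by
    simpa [heven] using ((IntervalIntegrable.iff_comp_neg (by finiteness)).1 hf).symm
  rw [← integral_add_adjacent_intervals hneg hf, ← neg_zero, ← integral_comp_neg]
  simp only [heven, neg_zero, two_smul]

lemma hasDerivAt_two_mul_arccos_mul_cos {c η : ℝ} (h₁ : -1 < c * cos η)
    (h₂ : c * cos η < 1) :
    HasDerivAt (fun η => 2 * arccos (c * cos η))
      (2 * c * sin η / sin (arccos (c * cos η))) η := by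
  have hchain := (hasDerivAt_arccos h₁.ne' h₂.ne).comp η ((hasDerivAt_cos η).const_mul c)
  refine (hchain.const_mul 2).congr_deriv ?_
  rw [sin_arccos]
  ring

lemma sin_arccos_pos {x : ℝ} (h₁ : -1 < x) (h₂ : x < 1) : 0 < sin (arccos x) :=
  sin_pos_of_pos_of_lt_pi (arccos_pos.2 h₂) (arccos_lt_pi.2 h₁)

lemma integral_inv_arccos_mul_cos_mul_cos_mul_sin {c : ℝ} (hc₀ : 0 < c) (hc₁ : c < 1) :
    ∫ η in 0..π / 2, (arccos (c * cos η))⁻¹ * cos η * sin η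
      = (∫ s in 2 * arccos c..π, sinc s) / (2 * c ^ 2) := by
  have hrange : ∀ η ∈ uIcc 0 (π / 2), -1 < c * cos η ∧ c * cos η < 1 := by
    intro η hη
    rw [uIcc_of_le (by positivity)] at hη
    have := cos_nonneg_of_mem_Icc ⟨by linarith [pi_pos, hη.1], hη.2⟩
    constructor <;> nlinarith [cos_le_one η]
  have hsin : ∀ η ∈ uIcc 0 (π / 2), 0 < sin (arccos (c * cos η)) := fun η hη =>
    sin_arccos_pos (hrange η hη).1 (hrange η hη).2
  have hsubst := integral_comp_mul_deriv
    (fun η hη => hasDerivAt_two_mul_arccos_mul_cos (hrange η hη).1 (hrange η hη).2)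
    (ContinuousOn.div (by fun_prop) (by fun_prop) fun η hη => (hsin η hη).ne') continuous_sinc
  simp only [cos_zero, mul_one, cos_pi_div_two, mul_zero, arccos_zero,
    mul_div_cancel₀ _ (two_ne_zero' ℝ)] at hsubst
  rw [← hsubst, eq_div_iff (by positivity), ← intervalIntegral.integral_mul_const]
  refine integral_congr fun η hη => ?_
  simp only [Function.comp_apply]
  set t := arccos (c * cos η)
  have ht : 0 < t := arccos_pos.2 (hrange η hη).2
  have hcos : cos t = c * cos η := cos_arccos (hrange η hη).1.le (hrange η hη).2.le
  have hsin_t : sin t ≠ 0 := (hsin η hη).ne'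
  rw [sinc_of_ne_zero (by positivity), sin_two_mul, hcos]
  field_simp

lemma hasDerivAt_integral_two_mul_left {f : ℝ → ℝ} (hf : Continuous f) (θ b : ℝ) :
    HasDerivAt (fun θ => ∫ s in 2 * θ..b, f s) (-(2 * f (2 * θ))) θ := by
  have hleft := integral_hasDerivAt_left (hf.intervalIntegrable (2 * θ) b)
    (hf.stronglyMeasurableAtFilter _ _) hf.continuousAt
  refine (hleft.comp θ ((hasDerivAt_id θ).const_mul 2)).congr_deriv ?_
  ring

lemma sinc_two_mul_mul_tan {θ : ℝ} (hθ : cos θ ≠ 0) :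
    sinc (2 * θ) * tan θ = (1 - cos (2 * θ)) / (2 * θ) := by
  rcases eq_or_ne θ 0 with rfl | hθ₀
  · simp
  rw [sinc_of_ne_zero (by positivity), tan_eq_sin_div_cos, sin_two_mul, cos_two_mul,
    ← sin_sq_add_cos_sq θ]
  field_simp
  ring

lemma integral_integral_sinc_two_mul_div_cos_sq {a : ℝ} (ha₀ : 0 ≤ a) (ha : a < π / 2) :
    ∫ θ in 0..a, (∫ s in 2 * θ..π, sinc s) * (1 / cos θ ^ 2)
      = (∫ s in 2 * a..π, sinc s) * tan a + ∫ t in 0..2 * a, (1 - cos t) / t := by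
  have hcos : ∀ θ ∈ uIcc 0 a, cos θ ≠ 0 := by
    intro θ hθ
    rw [uIcc_of_le ha₀] at hθ
    exact (cos_pos_of_mem_Ioo ⟨by linarith [pi_pos, hθ.1], by linarith [hθ.2]⟩).ne'
  rw [integral_mul_deriv_eq_deriv_mul
    (fun θ _ => hasDerivAt_integral_two_mul_left continuous_sinc θ π)
    (fun θ hθ => hasDerivAt_tan (hcos θ hθ)) (Continuous.intervalIntegrable (by fun_prop) _ _)
    (ContinuousOn.intervalIntegrable (ContinuousOn.div (by fun_prop) (by fun_prop)
      fun θ hθ => pow_ne_zero 2 (hcos θ hθ)))]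
  have hremainder : ∫ θ in 0..a, -(2 * sinc (2 * θ)) * tan θ
      = -∫ t in 0..2 * a, (1 - cos t) / t := by
    have hscale := smul_integral_comp_mul_left (a := 0) (b := a) (fun t => (1 - cos t) / t) 2
    rw [mul_zero, smul_eq_mul] at hscale
    rw [← hscale, ← intervalIntegral.integral_const_mul, ← intervalIntegral.integral_neg]
    refine integral_congr fun θ hθ => ?_
    rw [← sinc_two_mul_mul_tan (hcos θ hθ)]
    ring
  rw [hremainder, tan_zero, mul_zero, sub_zero, sub_neg_eq_add]

lemma integral_integral_inv_arccos_cos_mul_cos {a : ℝ} (ha₀ : 0 < a) (ha : a < π / 2) :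
    ∫ θ in -a..a, ∫ η in 0..π / 2, (arccos (cos θ * cos η))⁻¹ * cos η * sin η
      = (∫ t in 0..2 * a, (1 - cos t) / t) + (∫ t in 2 * a..π, sin t / t) * tan a := by
  set F := fun θ => ∫ η in 0..π / 2, (arccos (cos θ * cos η))⁻¹ * cos η * sin η
  set G := fun θ => (∫ s in 2 * θ..π, sinc s) / (2 * cos θ ^ 2)
  have hcos : ∀ θ ∈ uIcc 0 a, 0 < cos θ := by
    intro θ hθ
    rw [uIcc_of_le ha₀.le] at hθ
    exact cos_pos_of_mem_Ioo ⟨by linarith [pi_pos, hθ.1], by linarith [hθ.2]⟩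
  have hFG : EqOn F G (uIoc 0 a) := by
    intro θ hθ
    have hcos_pos := hcos θ (uIoc_subset_uIcc hθ)
    rw [uIoc_of_le ha₀.le] at hθ
    have hcos_lt : cos θ < 1 := by
      simpa using cos_lt_cos_of_nonneg_of_le_pi le_rfl (by linarith [hθ.2]) hθ.1
    simp only [F, G]
    rw [integral_inv_arccos_mul_cos_mul_cos_mul_sin hcos_pos hcos_lt,
      arccos_cos hθ.1.le (by linarith [hθ.2])]
  have hG : ContinuousOn G (uIcc 0 a) := by
    refine ContinuousOn.div (Continuous.continuousOn ?_) (by fun_prop)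
      fun θ hθ => (mul_pos two_pos (pow_pos (hcos θ hθ) 2)).ne'
    exact continuous_iff_continuousAt.2 fun θ =>
      (hasDerivAt_integral_two_mul_left continuous_sinc θ π).continuousAt
  have hF : IntervalIntegrable F volume 0 a :=
    (intervalIntegrable_congr hFG).2 hG.intervalIntegrable
  calc ∫ θ in -a..a, F θ
      = 2 * ∫ θ in 0..a, G θ := by
        rw [integral_neg_eq_two_smul_of_even (fun θ => by simp only [F, cos_neg]) hF, smul_eq_mul,
          integral_congr_ae (ae_of_all _ fun θ hθ => hFG hθ)]
    _ = ∫ θ in 0..a, (∫ s in 2 * θ..π, sinc s) * (1 / cos θ ^ 2) := by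
        rw [← intervalIntegral.integral_const_mul]
        refine integral_congr fun θ _ => ?_
        simp only [G]
        field_simp
    _ = _ := by
        rw [integral_integral_sinc_two_mul_div_cos_sq ha₀.le ha,
          integral_sin_div_eq_integral_sinc]
        ring

theorem neg_one_moment (n : ℕ) (hn : 3 ≤ n) :
    momentInegOne n =
        ((n : ℝ) / Real.pi) *
          ( Real.eulerMascheroniConstant - Ci (2 * Real.pi / n) + Real.log (2 * Real.pi / n)
            + (Si Real.pi - Si (2 * Real.pi / n)) * Real.tan (Real.pi / n) ) ∧
      momentInegOne n =
        ((n : ℝ) / Real.pi) *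
          ( (∫ t in (0 : ℝ)..(2 * Real.pi / n), (1 - Real.cos t) / t)
            + (∫ t in (2 * Real.pi / n)..Real.pi, Real.sin t / t) * Real.tan (Real.pi / n) ) := by
  have hn' : (3 : ℝ) ≤ n := by exact_mod_cast hn
  have ha : π / n < π / 2 := div_lt_div_of_pos_left pi_pos two_pos (by linarith)
  have h2a : 2 * (π / n) = 2 * π / n := by ring
  have hmoment : momentInegOne n = n / π * ((∫ t in 0..2 * π / n, (1 - cos t) / t)
      + (∫ t in 2 * π / n..π, sin t / t) * tan (π / n)) := by
    rw [momentInegOne, intervalIntegral.integral_const, smul_eq_mul,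
      integral_integral_inv_arccos_cos_mul_cos (by positivity) ha, h2a]
    field_simp
    ring
  refine ⟨?_, hmoment⟩
  rw [hmoment, Ci, Si_sub_Si]
  ring
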